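/- Let I be an ideal of S such that in_{x_n}(I) = C(x_n,I) ∩ (N(x_n,I) + (x_n)) is a nondegenerate geometric vertex decomposition, suppose N(x_n,I) has no embedded primes, and fix q ∈ C(x_n,I) and r ∈ S with no term of q or r divisible by x_n such that x_n·q + r ∈ I and both q and x_n·q + r are nonzerodivisors modulo N(x_n,I). Then for each f ∈ C(x_n,I) there exists g_f ∈ S, unique modulo N(x_n,I), such that f·(x_n·q + r) − g_f·q ∈ N(x_n,I); moreover g_f may be chosen to lie in I. -/

import Mathlib

open MvPolynomial

/-- The trace map on a polynomial ring: on a monomial `m`, it returns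
`(m·x_1⋯x_n)^{1/p}/(x_1⋯x_n)` if `m·x_1⋯x_n` is a `p`-th power of a monomial,
and `0` otherwise, extended `κ`-linearly. -/
noncomputable def Tr (κ : Type*) [CommSemiring κ] {σ : Type*} [Fintype σ] [DecidableEq σ]
    (p : ℕ) (f : MvPolynomial σ κ) : MvPolynomial σ κ :=
  ∑ b ∈ f.support,
    if ∀ i : σ, (b i + 1) % p = 0 then
      MvPolynomial.monomial (Finsupp.equivFunOnFinite.symm fun i => (b i + 1) / p - 1) (f.coeff b)
    else 0

/-- A Frobenius splitting: an additive map `φ` with `φ(a^p·b) = a·φ(b)` and `φ(1) = 1`. -/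
def IsFrobSplitting {R : Type*} [CommSemiring R] (p : ℕ) (φ : R → R) : Prop :=
  (∀ a b : R, φ (a + b) = φ a + φ b) ∧ (∀ a b : R, φ (a ^ p * b) = a * φ b) ∧ φ 1 = 1

/-- `φ` compatibly splits the ideal `I` if `φ(I) ⊆ I`. -/
def CompatiblySplits {R : Type*} [CommSemiring R] (φ : R → R) (I : Ideal R) : Prop :=
  ∀ a ∈ I, φ a ∈ I

/-- `f` has no term divisible by the variable `y`. -/
def NoVar {κ : Type*} [CommSemiring κ] {σ : Type*} (y : σ) (f : MvPolynomial σ κ) : Prop :=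
  ∀ b ∈ f.support, (b : σ →₀ ℕ) y = 0

/-- `in_y(f)`: the sum of the terms of `f` of highest degree in the variable `y`. -/
noncomputable def inY {κ : Type*} [CommSemiring κ] {σ : Type*} [DecidableEq σ]
    (y : σ) (f : MvPolynomial σ κ) : MvPolynomial σ κ :=
  ∑ b ∈ f.support,
    if (b : σ →₀ ℕ) y = f.degreeOf y then MvPolynomial.monomial b (f.coeff b) else 0

/-- `in_y(I)`, the ideal generated by `in_y(f)` for `f ∈ I`. -/
noncomputable def inYIdeal {κ : Type*} [CommSemiring κ] {σ : Type*} [DecidableEq σ]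
    (y : σ) (I : Ideal (MvPolynomial σ κ)) : Ideal (MvPolynomial σ κ) :=
  Ideal.span { g | ∃ f ∈ I, g = inY y f }

/-- The saturation `J : x^∞`. -/
def satPow {R : Type*} [CommRing R] (J : Ideal R) (x : R) : Ideal R where
  carrier := { f | ∃ k : ℕ, x ^ k * f ∈ J }
  zero_mem' := ⟨0, by simp⟩
  add_mem' := by
    rintro a b ⟨k, hk⟩ ⟨l, hl⟩
    refine ⟨k + l, ?_⟩
    have h := J.add_mem (J.mul_mem_left (x ^ l) hk) (J.mul_mem_left (x ^ k) hl)
    have e : x ^ (k + l) * (a + b) = x ^ l * (x ^ k * a) + x ^ k * (x ^ l * b) := by ring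
    rwa [e]
  smul_mem' := by
    rintro c a ⟨k, hk⟩
    refine ⟨k, ?_⟩
    have h := J.mul_mem_left c hk
    have e : x ^ k * (c • a) = c * (x ^ k * a) := by
      simp [smul_eq_mul]; ring
    rwa [e]

/-- `C(y,I) = in_y(I) : y^∞`. -/
noncomputable def Cyd {κ : Type*} [Field κ] {σ : Type*} [DecidableEq σ]
    (y : σ) (I : Ideal (MvPolynomial σ κ)) : Ideal (MvPolynomial σ κ) :=
  satPow (inYIdeal y I) (X y)

/-- `N(y,I)`, the ideal generated by the elements of `I` having no term divisible by `y`. -/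
noncomputable def Nyd {κ : Type*} [Field κ] {σ : Type*} (y : σ) (I : Ideal (MvPolynomial σ κ)) :
    Ideal (MvPolynomial σ κ) :=
  Ideal.span { f | f ∈ I ∧ NoVar y f }

/-- `I` admits a geometric vertex decomposition at `y`. -/
def IsGVD {κ : Type*} [Field κ] {σ : Type*} [DecidableEq σ]
    (y : σ) (I : Ideal (MvPolynomial σ κ)) : Prop :=
  inYIdeal y I = Cyd y I ⊓ (Nyd y I + Ideal.span {X y}) ∧
    ((Cyd y I).radical = (Nyd y I).radical ∨
      ∀ P ∈ (Cyd y I).minimalPrimes, P ∉ (Nyd y I).minimalPrimes)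

/-- A nondegenerate geometric vertex decomposition. -/
def IsNondegGVD {κ : Type*} [Field κ] {σ : Type*} [DecidableEq σ]
    (y : σ) (I : Ideal (MvPolynomial σ κ)) : Prop :=
  IsGVD y I ∧ Cyd y I ≠ ⊤ ∧ (Cyd y I).radical ≠ (Nyd y I).radical

/-- A degenerate geometric vertex decomposition. -/
def IsDegenGVD {κ : Type*} [Field κ] {σ : Type*} [DecidableEq σ]
    (y : σ) (I : Ideal (MvPolynomial σ κ)) : Prop :=
  IsGVD y I ∧ (Cyd y I = ⊤ ∨ (Cyd y I).radical = (Nyd y I).radical)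

/-- The ideal `N` has no embedded primes: every associated prime is minimal. -/
def NoEmbeddedPrimes {R : Type*} [CommRing R] (N : Ideal R) : Prop :=
  associatedPrimes R (R ⧸ N) ⊆ N.minimalPrimes

/-- `q` is a nonzerodivisor modulo `N`. -/
def NZDMod {R : Type*} [CommRing R] (N : Ideal R) (q : R) : Prop :=
  ∀ a : R, q * a ∈ N → a ∈ N

/-!
Write `y = x_n` and let `W` be the ideal of those `f` with `f·(yq + r) ∈ N(y,I) + I·q`; it
contains `N(y,I)`, and the theorem amounts to `C(y,I) ≤ W`, uniqueness being the nonzerodivisor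
property of `q`. For the grading by degree in `y`, `in_y(I)` is homogeneous, hence so is its
saturation `C(y,I)`, so it suffices to treat `f = y^e c` with `c ∈ C(y,I)` free of `y`. Then
`y c ∈ C(y,I) ∩ (y) ⊆ in_y(I)`, and the `y`-degree-one part of an expression of `y c` through
generators `in_y(h)`, `h ∈ I`, only involves generators of `y`-degree at most one. Such a
generator is either `h ∈ N(y,I)` itself, or `y c'` where `h = y c' + h₀` with `c'`, `h₀` free of
`y`; in the latter case `c'·(yq + r) - h·q = c' r - h₀ q` lies in `I` and is free of `y`, so
`c' ∈ W`.
-/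

section GradedRing

variable {A ι : Type*} [CommRing A] [SetLike ι A] [AddSubmonoidClass ι A] (𝒜 : ℕ → ι) [GradedRing 𝒜]

theorem Ideal.IsHomogeneous.le_of_forall_homogeneous_mem {J K : Ideal A}
    (hJ : J.IsHomogeneous 𝒜) (h : ∀ i, ∀ x ∈ 𝒜 i, x ∈ J → x ∈ K) : J ≤ K := by
  classical
  intro x hx
  rw [← DirectSum.sum_support_decompose 𝒜 x]
  exact K.sum_mem fun i _ => h i _ (SetLike.coe_mem _) (hJ i hx)

theorem satPow_isHomogeneous {J : Ideal A} (hJ : J.IsHomogeneous 𝒜) {x : A} {d : ℕ}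
    (hx : x ∈ 𝒜 d) : (satPow J x).IsHomogeneous 𝒜 := by
  rintro i f ⟨k, hk⟩
  refine ⟨k, ?_⟩
  have hxk : x ^ k ∈ 𝒜 (k • d) := SetLike.pow_mem_graded k hx
  have := hJ (k • d + i) hk
  rwa [DirectSum.coe_decompose_mul_of_left_mem_of_le 𝒜 hxk le_self_add,
    Nat.add_sub_cancel_left] at this

theorem decompose_mem_of_mem_span {S : Set A} (hS : ∀ s ∈ S, SetLike.IsHomogeneousElem 𝒜 s)
    {K : Ideal A} {e : ℕ} (hK : ∀ s ∈ S, ∀ d ≤ e, s ∈ 𝒜 d → ∀ a ∈ 𝒜 (e - d), a * s ∈ K)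
    {u : A} (hu : u ∈ Ideal.span S) : (DirectSum.decompose 𝒜 u e : A) ∈ K := by
  classical
  suffices ∀ b, (DirectSum.decompose 𝒜 (b * u) e : A) ∈ K by simpa using this 1
  induction hu using Submodule.span_induction with
  | mem s hs =>
    intro b
    obtain ⟨d, hd⟩ := hS s hs
    rw [DirectSum.coe_decompose_mul_of_right_mem 𝒜 e hd]
    split_ifs with hde
    · exact hK s hs d hde hd _ (SetLike.coe_mem _)
    · exact K.zero_mem
  | zero => simp
  | add u v _ _ hu hv => intro b; simpa [mul_add] using K.add_mem (hu b) (hv b)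
  | smul a u _ hu => intro b; simpa [mul_assoc] using hu (b * a)

end GradedRing

section WitnessIdeal

variable {κ : Type*} [Field κ] {σ : Type*} {y : σ}
  {I : Ideal (MvPolynomial σ κ)} {q r : MvPolynomial σ κ}

variable (y I q r) in
noncomputable def witnessIdeal : Ideal (MvPolynomial σ κ) :=
  (Nyd y I ⊔ I * Ideal.span {q}).colon {X y * q + r}

theorem mem_witnessIdeal {f : MvPolynomial σ κ} :
    f ∈ witnessIdeal y I q r ↔ ∃ g ∈ I, f * (X y * q + r) - g * q ∈ Nyd y I := by
  simp only [witnessIdeal, Submodule.mem_colon_singleton, smul_eq_mul, Submodule.mem_sup,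
    Ideal.mem_mul_span_singleton]
  constructor
  · rintro ⟨n, hn, _, ⟨g, hg, rfl⟩, hsum⟩
    exact ⟨g, hg, by rwa [← hsum, add_sub_cancel_right]⟩
  · rintro ⟨g, hg, hN⟩
    exact ⟨_, hN, _, ⟨g, hg, rfl⟩, sub_add_cancel _ _⟩

theorem mem_Nyd_of_noVar {f : MvPolynomial σ κ} (hfI : f ∈ I) (hf : NoVar y f) : f ∈ Nyd y I :=
  Ideal.subset_span ⟨hfI, hf⟩

theorem Nyd_le_witnessIdeal : Nyd y I ≤ witnessIdeal y I q r := fun _ hf =>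
  Submodule.mem_colon_singleton.mpr (Submodule.mem_sup_left (Ideal.mul_mem_right _ _ hf))

end WitnessIdeal

section DegreeIn

variable {κ : Type*} [CommRing κ] {σ : Type*} [DecidableEq σ]

variable (κ) in
abbrev degreeIn (y : σ) : ℕ → Submodule κ (MvPolynomial σ κ) :=
  weightedHomogeneousSubmodule κ (Pi.single y 1)

noncomputable instance (y : σ) : GradedAlgebra (degreeIn κ y) := weightedGradedAlgebra κ _

variable {y : σ}

theorem mem_degreeIn_iff {e : ℕ} {f : MvPolynomial σ κ} :
    f ∈ degreeIn κ y e ↔ ∀ b ∈ f.support, b y = e := by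
  simp only [mem_weightedHomogeneousSubmodule, IsWeightedHomogeneous, mem_support_iff,
    Finsupp.weight_single_one_apply]

theorem noVar_iff_mem_degreeIn_zero {f : MvPolynomial σ κ} : NoVar y f ↔ f ∈ degreeIn κ y 0 :=
  mem_degreeIn_iff.symm

theorem X_mem_degreeIn (y : σ) : (X y : MvPolynomial σ κ) ∈ degreeIn κ y 1 := by
  simpa using isWeightedHomogeneous_X κ (Pi.single y 1) y

theorem exists_eq_X_pow_mul_of_mem_degreeIn {e : ℕ} {u : MvPolynomial σ κ}
    (hu : u ∈ degreeIn κ y e) : ∃ c, u = X y ^ e * c ∧ NoVar y c := by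
  rw [mem_degreeIn_iff] at hu
  refine ⟨u.divMonomial (Finsupp.single y e), ?_, fun b hb => ?_⟩
  · ext b
    rw [X_pow_eq_monomial, coeff_monomial_mul']
    split_ifs with hb
    · rw [one_mul, coeff_divMonomial, add_tsub_cancel_of_le hb]
    · by_contra hc
      exact hb (Finsupp.single_le_iff.mpr (hu b (mem_support_iff.mpr hc)).ge)
  · rw [mem_support_iff, coeff_divMonomial] at hb
    simpa using hu _ (mem_support_iff.mpr hb)

theorem coeff_inY (y : σ) (f : MvPolynomial σ κ) (b : σ →₀ ℕ) :
    (inY y f).coeff b = if b y = f.degreeOf y then f.coeff b else 0 := by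
  classical
  rw [inY, coeff_sum, Finset.sum_eq_single b]
  · split_ifs <;> simp [coeff_monomial]
  · intro b' _ hb'
    split_ifs <;> simp [coeff_monomial, hb']
  · intro hb
    split_ifs <;> simp [notMem_support_iff.mp hb]

theorem inY_mem_degreeIn (f : MvPolynomial σ κ) : inY y f ∈ degreeIn κ y (f.degreeOf y) := by
  rw [mem_degreeIn_iff]
  intro b hb
  rw [mem_support_iff, coeff_inY] at hb
  by_contra h
  simp [h] at hb

theorem inY_eq_self_of_degreeOf_eq_zero {f : MvPolynomial σ κ} (hf : f.degreeOf y = 0) :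
    inY y f = f := by
  ext b
  rw [coeff_inY, hf]
  split_ifs with hb
  · rfl
  · by_contra hne
    exact hb (Nat.le_zero.mp (hf ▸ monomial_le_degreeOf y (mem_support_iff.mpr (Ne.symm hne))))

theorem noVar_sub_inY {f : MvPolynomial σ κ} (hf : f.degreeOf y ≤ 1) : NoVar y (f - inY y f) := by
  intro b hb
  rw [mem_support_iff, coeff_sub, coeff_inY] at hb
  have hfb : f.coeff b ≠ 0 := by rintro h0; simp [h0] at hb
  have hle := monomial_le_degreeOf y (mem_support_iff.mpr hfb)
  split_ifs at hb with htop
  · simp at hb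
  · omega

end DegreeIn

section Core

variable {κ : Type*} [Field κ] {σ : Type*} [DecidableEq σ] {y : σ}
  {I : Ideal (MvPolynomial σ κ)} {q r : MvPolynomial σ κ}

theorem inYIdeal_isHomogeneous (y : σ) (I : Ideal (MvPolynomial σ κ)) :
    (inYIdeal y I).IsHomogeneous (degreeIn κ y) :=
  Ideal.homogeneous_span _ _ fun _ ⟨f, _, hf⟩ => ⟨_, hf ▸ inY_mem_degreeIn f⟩

theorem Cyd_isHomogeneous (y : σ) (I : Ideal (MvPolynomial σ κ)) :
    (Cyd y I).IsHomogeneous (degreeIn κ y) :=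
  satPow_isHomogeneous _ (inYIdeal_isHomogeneous y I) (X_mem_degreeIn y)

theorem mem_witnessIdeal_of_X_mul_add_mem (hq : NoVar y q) (hr : NoVar y r)
    (hqrI : X y * q + r ∈ I) {c h₀ : MvPolynomial σ κ} (hc : NoVar y c) (hh₀ : NoVar y h₀)
    (hI : X y * c + h₀ ∈ I) : c ∈ witnessIdeal y I q r := by
  refine mem_witnessIdeal.mpr ⟨_, hI, mem_Nyd_of_noVar ?_ ?_⟩
  · exact I.sub_mem (I.mul_mem_left c hqrI) (I.mul_mem_right q hI)
  · rw [show c * (X y * q + r) - (X y * c + h₀) * q = c * r - h₀ * q by ring,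
      noVar_iff_mem_degreeIn_zero]
    rw [noVar_iff_mem_degreeIn_zero] at hq hr hc hh₀
    exact Submodule.sub_mem _ (SetLike.mul_mem_graded hc hr) (SetLike.mul_mem_graded hh₀ hq)

theorem mul_inY_mem_span_X_mul_witnessIdeal (hq : NoVar y q) (hr : NoVar y r)
    (hqrI : X y * q + r ∈ I) {h a : MvPolynomial σ κ} (hI : h ∈ I) {d : ℕ} (hd : d ≤ 1)
    (hh : inY y h ∈ degreeIn κ y d) (ha : a ∈ degreeIn κ y (1 - d)) :
    a * inY y h ∈ Ideal.span {X y} * witnessIdeal y I q r := by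
  rcases eq_or_ne (inY y h) 0 with h0 | h0
  · simp [h0]
  have hdeg : h.degreeOf y = d := DirectSum.degree_eq_of_mem_mem _ (inY_mem_degreeIn h) hh h0
  rw [Ideal.mem_span_singleton_mul]
  interval_cases d
  · obtain ⟨a', rfl, -⟩ := exists_eq_X_pow_mul_of_mem_degreeIn ha
    rw [inY_eq_self_of_degreeOf_eq_zero hdeg] at hh ⊢
    refine ⟨a' * h, Nyd_le_witnessIdeal (Ideal.mul_mem_left _ _ (mem_Nyd_of_noVar hI ?_)), by ring⟩
    exact noVar_iff_mem_degreeIn_zero.mpr hh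
  · obtain ⟨c, hc, hcy⟩ := exists_eq_X_pow_mul_of_mem_degreeIn hh
    rw [pow_one] at hc
    have hcW : c ∈ witnessIdeal y I q r := by
      refine mem_witnessIdeal_of_X_mul_add_mem hq hr hqrI hcy (noVar_sub_inY hdeg.le) ?_
      rwa [← hc, add_sub_cancel]
    exact ⟨a * c, Ideal.mul_mem_left _ _ hcW, by rw [hc]; ring⟩

theorem mem_witnessIdeal_of_noVar_of_mem_Cyd (hq : NoVar y q) (hr : NoVar y r)
    (hqrI : X y * q + r ∈ I) (hGVD : inYIdeal y I = Cyd y I ⊓ (Nyd y I + Ideal.span {X y}))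
    {f : MvPolynomial σ κ} (hf : NoVar y f) (hfC : f ∈ Cyd y I) : f ∈ witnessIdeal y I q r := by
  have hXf : X y * f ∈ inYIdeal y I := by
    rw [hGVD]
    exact ⟨Ideal.mul_mem_left _ _ hfC,
      Submodule.mem_sup_right (Ideal.mem_span_singleton.mpr ⟨f, rfl⟩)⟩
  have hXf1 : X y * f ∈ degreeIn κ y 1 :=
    SetLike.mul_mem_graded (X_mem_degreeIn y) (noVar_iff_mem_degreeIn_zero.mp hf)
  have hXfW : X y * f ∈ Ideal.span {X y} * witnessIdeal y I q r := by
    rw [← DirectSum.decompose_of_mem_same _ hXf1]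
    refine decompose_mem_of_mem_span _ ?_ ?_ hXf
    · rintro _ ⟨h, -, rfl⟩
      exact ⟨_, inY_mem_degreeIn h⟩
    · rintro _ ⟨h, hI, rfl⟩ d hd hh a ha
      exact mul_inY_mem_span_X_mul_witnessIdeal hq hr hqrI hI hd hh ha
  obtain ⟨g, hg, hgf⟩ := Ideal.mem_span_singleton_mul.mp hXfW
  rwa [← mul_left_cancel₀ (X_ne_zero y) hgf]

theorem Cyd_le_witnessIdeal (hq : NoVar y q) (hr : NoVar y r) (hqrI : X y * q + r ∈ I)
    (hGVD : inYIdeal y I = Cyd y I ⊓ (Nyd y I + Ideal.span {X y})) :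
    Cyd y I ≤ witnessIdeal y I q r := by
  refine (Cyd_isHomogeneous y I).le_of_forall_homogeneous_mem _ fun e f hf hfC => ?_
  obtain ⟨c, rfl, hc⟩ := exists_eq_X_pow_mul_of_mem_degreeIn hf
  obtain ⟨k, hk⟩ := hfC
  have hcC : c ∈ Cyd y I := ⟨k + e, by rwa [pow_add, mul_assoc]⟩
  exact Ideal.mul_mem_left _ _ (mem_witnessIdeal_of_noVar_of_mem_Cyd hq hr hqrI hGVD hc hcC)

end Core

theorem gvd_part2_general {κ : Type*} [Field κ]
    {n : ℕ} (I : Ideal (MvPolynomial (Fin (n + 1)) κ))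
    (hgvd : IsNondegGVD (Fin.last n) I)
    (q r : MvPolynomial (Fin (n + 1)) κ)
    (hq : NoVar (Fin.last n) q) (hr : NoVar (Fin.last n) r)
    (hqrI : X (Fin.last n) * q + r ∈ I)
    (hqnzd : NZDMod (Nyd (Fin.last n) I) q) :
    ∀ f ∈ Cyd (Fin.last n) I,
      ∃ gf : MvPolynomial (Fin (n + 1)) κ, gf ∈ I ∧
        f * (X (Fin.last n) * q + r) - gf * q ∈ Nyd (Fin.last n) I ∧
        ∀ gf' : MvPolynomial (Fin (n + 1)) κ,
          f * (X (Fin.last n) * q + r) - gf' * q ∈ Nyd (Fin.last n) I →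
            gf' - gf ∈ Nyd (Fin.last n) I := by
  intro f hf
  obtain ⟨g, hgI, hgN⟩ := mem_witnessIdeal.mp (Cyd_le_witnessIdeal hq hr hqrI hgvd.1.1 hf)
  refine ⟨g, hgI, hgN, fun g' hg' => hqnzd _ ?_⟩
  have e : q * (g' - g) =
      (f * (X (Fin.last n) * q + r) - g * q) - (f * (X (Fin.last n) * q + r) - g' * q) := by
    ring
  rw [e]
  exact Ideal.sub_mem _ hgN hg'

/-- Part (2): for each `f ∈ C(x_n,I)` there is `g_f`, unique modulo `N(x_n,I)`, with
`f·(x_n·q + r) − g_f·q ∈ N(x_n,I)`, and `g_f` may be chosen in `I`. -/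
theorem gvd_part2 {p : ℕ} [Fact p.Prime] {κ : Type*} [Field κ] [CharP κ p] [PerfectRing κ p]
    {n : ℕ} (I : Ideal (MvPolynomial (Fin (n + 1)) κ))
    (hgvd : IsNondegGVD (Fin.last n) I)
    (hemb : NoEmbeddedPrimes (Nyd (Fin.last n) I))
    (q r : MvPolynomial (Fin (n + 1)) κ)
    (hqC : q ∈ Cyd (Fin.last n) I)
    (hq : NoVar (Fin.last n) q) (hr : NoVar (Fin.last n) r)
    (hqrI : X (Fin.last n) * q + r ∈ I)
    (hqnzd : NZDMod (Nyd (Fin.last n) I) q)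
    (hqrnzd : NZDMod (Nyd (Fin.last n) I) (X (Fin.last n) * q + r)) :
    ∀ f ∈ Cyd (Fin.last n) I,
      ∃ gf : MvPolynomial (Fin (n + 1)) κ, gf ∈ I ∧
        f * (X (Fin.last n) * q + r) - gf * q ∈ Nyd (Fin.last n) I ∧
        ∀ gf' : MvPolynomial (Fin (n + 1)) κ,
          f * (X (Fin.last n) * q + r) - gf' * q ∈ Nyd (Fin.last n) I →
            gf' - gf ∈ Nyd (Fin.last n) I :=
  gvd_part2_general I hgvd q r hq hr hqrI hqnzd
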